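/- (Proposition 3.3, integrability condition.) Assume the Mecke identity with Papangelou intensity r, and assume: a : X×X → [0,∞) is measurable, symmetric (a(x,y) = a(y,x)), bounded, with sup_{x∈X} ∫_X a(x,y) ν(dy) < ∞; j : X → [0,∞) is measurable with r(x,γ) ≤ j(x) for all x ∈ X and γ ∈ Γ, with ∫_Λ j dν < ∞ for every Λ ∈ B₀(X), and sup_{x ∈ X\Λ₀} j(x) < ∞ for some Λ₀ ∈ B₀(X). For s ∈ [0,1] define c_s(x,y,γ) := a(x,y)·r(x,γ)^{s−1}·r(y,γ)^{s}·𝟙{r(x,γ)>0 and r(y,γ)>0}. Then for every s ∈ [0,1] and every Λ ∈ B₀(X), ∫_Γ ∑_{x∈γ} ∫_X c_s(x,y,γ\{x})·(χ_Λ(x)+χ_Λ(y)) ν(dy) μ(dγ) < ∞. -/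

import Mathlib

open MeasureTheory Set ENNReal Filter Topology

noncomputable section

/-- The configuration space over `X`: the set of all locally finite subsets of `X`. -/
def Config (X : Type*) [TopologicalSpace X] : Type _ :=
  {γ : Set X // ∀ K : Set X, IsCompact K → (γ ∩ K).Finite}

namespace Config

variable {X : Type*} [TopologicalSpace X]

/-- Removal of a point from a configuration, `γ \ {x}`. -/
def erase (γ : Config X) (x : X) : Config X :=
  ⟨γ.1 \ {x}, fun K hK => (γ.2 K hK).subset fun _ hz => ⟨hz.1.1, hz.2⟩⟩

/-- Insertion of a point into a configuration, `γ ∪ {x}`. -/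
def ins (γ : Config X) (x : X) : Config X :=
  ⟨insert x γ.1, fun K hK => ((γ.2 K hK).insert x).subset (by
    rintro z ⟨hz1, hz2⟩
    rcases Set.mem_insert_iff.mp hz1 with rfl | h
    · exact Set.mem_insert _ _
    · exact Set.mem_insert_of_mem _ ⟨h, hz2⟩)⟩

end Config

variable {X : Type*} [TopologicalSpace X]

/-- Cylinder functions `FC_b`: `F(γ) = g(⟨φ₁,γ⟩, …, ⟨φ_N,γ⟩)` with the `φᵢ` continuous
with compact support and `g` bounded continuous; here `⟨φ,γ⟩ = ∑_{x∈γ} φ(x)`. -/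
def IsCylinder (F : Config X → ℝ) : Prop :=
  ∃ (N : ℕ) (φ : Fin N → X → ℝ) (g : (Fin N → ℝ) → ℝ),
    (∀ i, Continuous (φ i)) ∧ (∀ i, HasCompactSupport (φ i)) ∧
      Continuous g ∧ (∃ C : ℝ, ∀ v, |g v| ≤ C) ∧
      ∀ γ : Config X, F γ = g fun i => ∑' x : γ.1, φ i x

/-- `(D_x^- F)(γ) = F(γ \ {x}) - F(γ)`. -/
def Dm (F : Config X → ℝ) (x : X) (γ : Config X) : ℝ := F (γ.erase x) - F γ

/-- `(D_x^+ F)(γ) = F(γ ∪ {x}) - F(γ)`. -/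
def Dp (F : Config X → ℝ) (x : X) (γ : Config X) : ℝ := F (γ.ins x) - F γ

/-- `(D_{xy}^{-+} F)(γ) = F((γ \ {x}) ∪ {y}) - F(γ)`. -/
def Dpm (F : Config X → ℝ) (x y : X) (γ : Config X) : ℝ := F ((γ.erase x).ins y) - F γ

variable [MeasurableSpace X]

/-- `Λ ∈ B₀(X)`: a relatively compact Borel set. -/
def IsB0 (Λ : Set X) : Prop := MeasurableSet Λ ∧ IsCompact (closure Λ)

/-- The σ-algebra on `Config X` generated by the counting maps `γ ↦ |γ ∩ Λ|`, `Λ ∈ B₀(X)`. -/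
instance : MeasurableSpace (Config X) :=
  ⨆ (Λ : Set X) (_ : IsB0 Λ),
    MeasurableSpace.comap (fun γ : Config X => (γ.1 ∩ Λ).ncard) ⊤

/-- The Mecke identity: `r` is a Papangelou intensity for `μ`, i.e.
`∫ ∑_{x∈γ} H(x,γ) μ(dγ) = ∫ ∫ r(x,γ) H(x,γ∪{x}) ν(dx) μ(dγ)` for measurable `H ≥ 0`. -/
def MeckeIdentity (ν : Measure X) (μ : Measure (Config X)) (r : X → Config X → ℝ) : Prop :=
  ∀ H : X → Config X → ℝ≥0∞, Measurable (fun p : X × Config X => H p.1 p.2) →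
    ∫⁻ γ, ∑' x : γ.1, H (x : X) γ ∂μ =
      ∫⁻ γ, ∫⁻ x, ENNReal.ofReal (r x γ) * H x (γ.ins x) ∂ν ∂μ

/-- Condition (G1): `∫ ∑_{x∈γ∩Λ} d(x,γ\{x}) μ(dγ) < ∞` for every `Λ ∈ B₀(X)`. -/
def CondG1 (μ : Measure (Config X)) (d : X → Config X → ℝ) : Prop :=
  ∀ Λ : Set X, IsB0 Λ →
    ∫⁻ γ, ∑' x : ↥(γ.1 ∩ Λ), ENNReal.ofReal (d (x : X) (γ.erase (x : X))) ∂μ < ⊤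

/-- Condition (K1): `∫ ∑_{x∈γ} ∫ c(x,y,γ\{x})(χ_Λ(x)+χ_Λ(y)) ν(dy) μ(dγ) < ∞`
for every `Λ ∈ B₀(X)`. -/
def CondK1 (ν : Measure X) (μ : Measure (Config X)) (c : X → X → Config X → ℝ) : Prop :=
  ∀ Λ : Set X, IsB0 Λ →
    ∫⁻ γ, ∑' x : γ.1, ∫⁻ y,
        ENNReal.ofReal (c (x : X) y (γ.erase (x : X))) *
          (Λ.indicator (1 : X → ℝ≥0∞) (x : X) + Λ.indicator (1 : X → ℝ≥0∞) y) ∂ν ∂μ < ⊤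

/-- The Glauber Dirichlet form `ℰ_G(F,G)`. -/
def glauberE (μ : Measure (Config X)) (d : X → Config X → ℝ) (F G : Config X → ℝ) : ℝ :=
  ∫ γ, (∑' x : γ.1, d (x : X) (γ.erase (x : X)) * Dm F (x : X) γ * Dm G (x : X) γ) ∂μ

/-- The Kawasaki Dirichlet form `ℰ_K(F,G)`. -/
def kawasakiE (ν : Measure X) (μ : Measure (Config X)) (c : X → X → Config X → ℝ)
    (F G : Config X → ℝ) : ℝ :=
  ∫ γ, (∑' x : γ.1, ∫ y, c (x : X) y (γ.erase (x : X)) * Dpm F (x : X) y γ *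
    Dpm G (x : X) y γ ∂ν) ∂μ

/-!
By the Mecke identity the (K1) integral becomes
`∫∫ r(x,γ) ∫ c(x,y,(γ ∪ {x}) \ {x}) (χ_Λ(x) + χ_Λ(y)) ν(dy) ν(dx) μ(dγ)`, and since a configuration
is countable and `ν` has no atoms, `(γ ∪ {x}) \ {x} = γ` for `ν`-a.e. `x`. Then
`r(x,γ) c(x,y,γ) = a(x,y) r(x,γ)^s r(y,γ)^s ≤ (1 + j x) a(x,y) (1 + j y)`, a kernel free of `γ`.
By the symmetry of `a` the `χ_Λ(y)` half of the resulting double integral equals the `χ_Λ(x)` half,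
which is at most `∫_Λ (1 + j) dν · sup_x ∫ a(x,y) (1 + j y) ν(dy)`; the supremum is finite after
splitting the `y`-integral over `Λ₀` (where `a` is bounded and `j` integrable) and its complement
(where `j` is bounded and `a(x,·)` has uniformly bounded integral).
-/
namespace Config

section Topology

variable {Y : Type*} [TopologicalSpace Y]

theorem finite_inter_of_isCompact_closure (γ : Config Y) {Λ : Set Y}
    (hΛ : IsCompact (closure Λ)) : (γ.1 ∩ Λ).Finite :=
  (γ.2 _ hΛ).subset (inter_subset_inter_right _ subset_closure)

theorem erase_ins_of_notMem {γ : Config Y} {x : Y} (hx : x ∉ γ.1) : (γ.ins x).erase x = γ :=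
  Subtype.ext (insert_sdiff_self_of_notMem hx)

theorem isClosed [T1Space Y] [WeaklyLocallyCompactSpace Y] (γ : Config Y) : IsClosed γ.1 := by
  have hlf : LocallyFinite fun x : γ.1 => ({x.1} : Set Y) := fun x => by
    obtain ⟨K, hK, hKx⟩ := exists_compact_mem_nhds x
    refine ⟨K, hKx, ((γ.2 K hK).preimage Subtype.val_injective.injOn).subset ?_⟩
    rintro ⟨y, hy⟩ ⟨_, rfl, hyK⟩
    exact ⟨hy, hyK⟩
  simpa using hlf.isClosed_iUnion fun _ => isClosed_singleton

theorem countable [SigmaCompactSpace Y] (γ : Config Y) : γ.1.Countable := by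
  rw [← inter_univ γ.1, ← iUnion_compactCovering, inter_iUnion]
  exact countable_iUnion fun n => (γ.2 _ (isCompact_compactCovering Y n)).countable

end Topology

theorem measurable_ncard_inter {Λ : Set X} (hΛ : IsB0 Λ) :
    Measurable fun γ : Config X => (γ.1 ∩ Λ).ncard := fun t _ =>
  le_iSup₂ (f := fun (Λ : Set X) (_ : IsB0 Λ) =>
    MeasurableSpace.comap (fun γ : Config X => (γ.1 ∩ Λ).ncard) ⊤) Λ hΛ _ ⟨t, trivial, rfl⟩

theorem measurable_of_forall_ncard_inter {α : Type*} [MeasurableSpace α] {g : α → Config X}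
    (h : ∀ Λ : Set X, IsB0 Λ → Measurable fun a => ((g a).1 ∩ Λ).ncard) : Measurable g := by
  rw [measurable_iff_comap_le]
  change MeasurableSpace.comap g (⨆ (Λ : Set X) (_ : IsB0 Λ),
    MeasurableSpace.comap (fun γ : Config X => (γ.1 ∩ Λ).ncard) ⊤) ≤ _
  simp only [MeasurableSpace.comap_iSup, MeasurableSpace.comap_comp]
  exact iSup₂_le fun Λ hΛ => measurable_iff_comap_le.mp (h Λ hΛ)

theorem measurableSet_inter_eq_empty [T2Space X] [SigmaCompactSpace X] [OpensMeasurableSpace X]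
    {V : Set X} (hV : MeasurableSet V) : MeasurableSet {γ : Config X | γ.1 ∩ V = ∅} := by
  have hB0 : ∀ n, IsB0 (V ∩ compactCovering X n) := fun n =>
    ⟨hV.inter (isCompact_compactCovering X n).isClosed.measurableSet,
      (isCompact_compactCovering X n).closure_of_subset inter_subset_right⟩
  have h : {γ : Config X | γ.1 ∩ V = ∅} =
      ⋂ n, (fun γ : Config X => (γ.1 ∩ (V ∩ compactCovering X n)).ncard) ⁻¹' {0} := by
    ext γ
    simp only [mem_ofPred_eq, mem_iInter, mem_preimage, mem_singleton_iff,
      ncard_eq_zero (γ.finite_inter_of_isCompact_closure (hB0 _).2)]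
    rw [← iUnion_eq_empty, ← inter_iUnion, ← inter_iUnion, iUnion_compactCovering, inter_univ]
  rw [h]
  exact .iInter fun n => measurable_ncard_inter (hB0 n) (measurableSet_singleton 0)

theorem measurableSet_mem [T2Space X] [LocallyCompactSpace X] [SecondCountableTopology X]
    [OpensMeasurableSpace X] : MeasurableSet {p : X × Config X | p.1 ∈ p.2.1} := by
  obtain ⟨B, hBc, -, hB⟩ := TopologicalSpace.exists_countable_basis X
  have h : {p : X × Config X | p.1 ∈ p.2.1}ᶜ = ⋃ U ∈ B, U ×ˢ {γ : Config X | γ.1 ∩ U = ∅} := by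
    ext ⟨x, γ⟩
    simp only [mem_compl_iff, mem_ofPred_eq, mem_iUnion, mem_prod, exists_prop]
    constructor
    · intro hx
      obtain ⟨U, hUB, hxU, hU⟩ := hB.exists_subset_of_mem_open hx γ.isClosed.isOpen_compl
      exact ⟨U, hUB, hxU, (subset_compl_iff_disjoint_left.mp hU).inter_eq⟩
    · rintro ⟨U, -, hxU, hU⟩ hx
      exact eq_empty_iff_forall_notMem.mp hU x ⟨hx, hxU⟩
  rw [← compl_compl {p : X × Config X | p.1 ∈ p.2.1}, h]
  exact (MeasurableSet.biUnion hBc fun U hU => (hB.isOpen hU).measurableSet.prod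
    (measurableSet_inter_eq_empty (hB.isOpen hU).measurableSet)).compl

theorem measurable_erase [T2Space X] [LocallyCompactSpace X] [SecondCountableTopology X]
    [OpensMeasurableSpace X] : Measurable fun p : X × Config X => p.2.erase p.1 := by
  classical
  refine measurable_of_forall_ncard_inter fun Λ hΛ => ?_
  have h : ∀ p : X × Config X, ((p.2.erase p.1).1 ∩ Λ).ncard =
      if p.1 ∈ p.2.1 ∩ Λ then (p.2.1 ∩ Λ).ncard - 1 else (p.2.1 ∩ Λ).ncard := by
    rintro ⟨x, γ⟩
    change ((γ.1 \ {x}) ∩ Λ).ncard = _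
    rw [← inter_sdiff_right_comm]
    split_ifs with hx
    · exact ncard_sdiff_singleton_of_mem hx
    · rw [sdiff_singleton_eq_self hx]
  simp only [h]
  exact Measurable.ite (measurableSet_mem.inter (measurable_fst hΛ.1))
    (((measurable_ncard_inter hΛ).comp measurable_snd).sub measurable_const)
    ((measurable_ncard_inter hΛ).comp measurable_snd)

end Config

theorem IsB0.measure_lt_top {Λ : Set X} (hΛ : IsB0 Λ) (ν : Measure X)
    [IsFiniteMeasureOnCompacts ν] : ν Λ < ⊤ :=
  (measure_mono subset_closure).trans_lt hΛ.2.measure_lt_top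

theorem condK1_of_le [T2Space X] [LocallyCompactSpace X] [SecondCountableTopology X]
    [OpensMeasurableSpace X] {ν : Measure X} [SFinite ν] [NullSingletonClass ν]
    {μ : Measure (Config X)} [IsProbabilityMeasure μ] {r : X → Config X → ℝ}
    (hMecke : MeckeIdentity ν μ r) {c : X → X → Config X → ℝ}
    (hc : Measurable fun q : (X × X) × Config X => c q.1.1 q.1.2 q.2) (Φ : X → X → ℝ≥0∞)
    (hΦ : ∀ x y γ, x ∉ γ.1 → ENNReal.ofReal (r x γ) * ENNReal.ofReal (c x y γ) ≤ Φ x y)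
    (hΦint : ∀ Λ : Set X, IsB0 Λ → ∫⁻ x, ∫⁻ y,
      Φ x y * (Λ.indicator (1 : X → ℝ≥0∞) x + Λ.indicator (1 : X → ℝ≥0∞) y) ∂ν ∂ν < ⊤) :
    CondK1 ν μ c := by
  intro Λ hΛ
  set w : X → X → ℝ≥0∞ := fun x y => Λ.indicator 1 x + Λ.indicator 1 y
  have hw : Measurable fun p : X × X => w p.1 p.2 :=
    (measurable_const.indicator hΛ.1).comp measurable_fst |>.add
      ((measurable_const.indicator hΛ.1).comp measurable_snd)
  have hH : Measurable fun p : X × Config X =>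
      ∫⁻ y, ENNReal.ofReal (c p.1 y (p.2.erase p.1)) * w p.1 y ∂ν :=
    Measurable.lintegral_prod_right' <|
      (hc.comp ((measurable_fst.fst.prodMk measurable_snd).prodMk
        (Config.measurable_erase.comp measurable_fst))).ennreal_ofReal.mul
      (hw.comp (measurable_fst.fst.prodMk measurable_snd))
  refine (hMecke (fun x γ => ∫⁻ y, ENNReal.ofReal (c x y (γ.erase x)) * w x y ∂ν) hH).trans_lt
    (lt_of_le_of_lt ?_ (hΦint Λ hΛ))
  calc ∫⁻ γ, ∫⁻ x, ENNReal.ofReal (r x γ) *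
        ∫⁻ y, ENNReal.ofReal (c x y ((γ.ins x).erase x)) * w x y ∂ν ∂ν ∂μ
      ≤ ∫⁻ _, ∫⁻ x, ∫⁻ y, Φ x y * w x y ∂ν ∂ν ∂μ := lintegral_mono fun γ => by
        refine lintegral_mono_ae ?_
        filter_upwards [measure_eq_zero_iff_ae_notMem.mp (γ.countable.measure_zero ν)] with x hx
        rw [Config.erase_ins_of_notMem hx, ← lintegral_const_mul' _ _ ofReal_ne_top]
        refine lintegral_mono fun y => ?_
        rw [← mul_assoc]
        gcongr ?_ * _
        exact hΦ x y γ hx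
    _ = ∫⁻ x, ∫⁻ y, Φ x y * w x y ∂ν ∂ν := by rw [lintegral_const, measure_univ, mul_one]

theorem Real.rpow_le_one_add {t u : ℝ} (ht : 0 ≤ t) (hu : u ∈ Icc (0 : ℝ) 1) :
    t ^ u ≤ 1 + t := by
  rcases le_total t 1 with h | h
  · linarith [Real.rpow_le_one ht h hu.1]
  · linarith [Real.rpow_le_self_of_one_le h hu.2]

def papangelouRate {α Γ : Type*} (a : α → α → ℝ) (r : α → Γ → ℝ) (s : ℝ) (x y : α) (γ : Γ) :
    ℝ :=
  if 0 < r x γ ∧ 0 < r y γ then a x y * r x γ ^ (s - 1) * r y γ ^ s else 0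

theorem measurable_papangelouRate {α Γ : Type*} [MeasurableSpace α] [MeasurableSpace Γ]
    {a : α → α → ℝ} {r : α → Γ → ℝ} (ha : Measurable fun p : α × α => a p.1 p.2)
    (hr : Measurable fun p : α × Γ => r p.1 p.2) (s : ℝ) :
    Measurable fun q : (α × α) × Γ => papangelouRate a r s q.1.1 q.1.2 q.2 := by
  have hr₁ : Measurable fun q : (α × α) × Γ => r q.1.1 q.2 :=
    hr.comp (measurable_fst.fst.prodMk measurable_snd)
  have hr₂ : Measurable fun q : (α × α) × Γ => r q.1.2 q.2 :=
    hr.comp (measurable_fst.snd.prodMk measurable_snd)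
  exact Measurable.ite ((hr₁ measurableSet_Ioi).inter (hr₂ measurableSet_Ioi))
    (((ha.comp measurable_fst).mul (hr₁.pow_const _)).mul (hr₂.pow_const _)) measurable_const

theorem ofReal_mul_papangelouRate_le {α Γ : Type*} {a : α → α → ℝ} {r : α → Γ → ℝ} {j : α → ℝ}
    (hrj : ∀ x γ, r x γ ≤ j x) {s : ℝ} (hs : s ∈ Icc (0 : ℝ) 1) (x y : α) (γ : Γ) :
    ENNReal.ofReal (r x γ) * ENNReal.ofReal (papangelouRate a r s x y γ) ≤
      (1 + ENNReal.ofReal (j x)) * ENNReal.ofReal (a x y) * (1 + ENNReal.ofReal (j y)) := by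
  unfold papangelouRate
  split_ifs with h
  · obtain ⟨hx, hy⟩ := h
    have hpow : ∀ z, 0 < r z γ → ENNReal.ofReal (r z γ ^ s) ≤ 1 + ENNReal.ofReal (j z) :=
      fun z hz => (ofReal_le_ofReal ((Real.rpow_le_one_add hz.le hs).trans
        (add_le_add_right (hrj z γ) 1))).trans ofReal_add_le |>.trans_eq (by rw [ofReal_one])
    have hprod : r x γ * (a x y * r x γ ^ (s - 1) * r y γ ^ s) =
        a x y * (r x γ ^ s * r y γ ^ s) := by
      rw [Real.rpow_sub_one hx.ne']
      field_simp
    rw [← ofReal_mul hx.le, hprod, ofReal_mul' (by positivity), ofReal_mul (by positivity)]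
    calc ENNReal.ofReal (a x y) * (ENNReal.ofReal (r x γ ^ s) * ENNReal.ofReal (r y γ ^ s))
        ≤ ENNReal.ofReal (a x y) * ((1 + ENNReal.ofReal (j x)) * (1 + ENNReal.ofReal (j y))) := by
          gcongr <;> exact hpow _ ‹_›
      _ = _ := by ring
  · simp

section Kernel

variable {α : Type*} [MeasurableSpace α] {ν : Measure α}

theorem lintegral_mul_le_of_le_of_le_off {A : α → α → ℝ≥0∞} {g : α → ℝ≥0∞} {Λ₀ : Set α}
    (hΛ₀ : MeasurableSet Λ₀) {M M' : ℝ≥0∞} (hM : M ≠ ⊤) (hM' : M' ≠ ⊤)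
    (hAM : ∀ x y, A x y ≤ M) (hgM' : ∀ y ∉ Λ₀, g y ≤ M') (x : α) :
    ∫⁻ y, A x y * g y ∂ν ≤ M * ∫⁻ y in Λ₀, g y ∂ν + M' * ⨆ x', ∫⁻ y, A x' y ∂ν := by
  rw [← lintegral_add_compl _ hΛ₀]
  gcongr ?_ + ?_
  · calc ∫⁻ y in Λ₀, A x y * g y ∂ν ≤ ∫⁻ y in Λ₀, M * g y ∂ν :=
          setLIntegral_mono' hΛ₀ fun y _ => by gcongr; exact hAM x y
      _ = M * ∫⁻ y in Λ₀, g y ∂ν := lintegral_const_mul' M _ hM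
  · calc ∫⁻ y in Λ₀ᶜ, A x y * g y ∂ν ≤ ∫⁻ y in Λ₀ᶜ, M' * A x y ∂ν :=
          setLIntegral_mono' hΛ₀.compl fun y hy => by rw [mul_comm]; gcongr; exact hgM' y hy
      _ = M' * ∫⁻ y in Λ₀ᶜ, A x y ∂ν := lintegral_const_mul' M' _ hM'
      _ ≤ M' * ⨆ x', ∫⁻ y, A x' y ∂ν := by
          gcongr
          exact setLIntegral_le_lintegral _ _ |>.trans (le_iSup (fun x' => ∫⁻ y, A x' y ∂ν) x)

theorem lintegral_lintegral_mul_indicator_add_of_symm [SFinite ν] {F : α → α → ℝ≥0∞}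
    (hF : Measurable fun p : α × α => F p.1 p.2) (hsymm : ∀ x y, F x y = F y x)
    {Λ : Set α} (hΛ : MeasurableSet Λ) :
    ∫⁻ x, ∫⁻ y, F x y * (Λ.indicator 1 x + Λ.indicator 1 y) ∂ν ∂ν =
      2 * ∫⁻ x in Λ, ∫⁻ y, F x y ∂ν ∂ν := by
  have hind : Measurable (Λ.indicator (1 : α → ℝ≥0∞)) := measurable_const.indicator hΛ
  have hleft : ∫⁻ x, ∫⁻ y, F x y * Λ.indicator 1 x ∂ν ∂ν = ∫⁻ x in Λ, ∫⁻ y, F x y ∂ν ∂ν := by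
    rw [← lintegral_indicator hΛ]
    congr with x
    by_cases hx : x ∈ Λ <;> simp [hx]
  have hFy : Measurable fun p : α × α => F p.1 p.2 * Λ.indicator 1 p.2 :=
    hF.mul (hind.comp measurable_snd)
  have hright : ∫⁻ x, ∫⁻ y, F x y * Λ.indicator 1 y ∂ν ∂ν =
      ∫⁻ x, ∫⁻ y, F x y * Λ.indicator 1 x ∂ν ∂ν := by
    rw [lintegral_lintegral_swap hFy.aemeasurable]
    simp_rw [hsymm]
  calc ∫⁻ x, ∫⁻ y, F x y * (Λ.indicator 1 x + Λ.indicator 1 y) ∂ν ∂ν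
      = ∫⁻ x, (∫⁻ y, F x y * Λ.indicator 1 x ∂ν) + ∫⁻ y, F x y * Λ.indicator 1 y ∂ν ∂ν :=
        lintegral_congr fun x => by
          simp_rw [mul_add]
          exact lintegral_add_right _ (hFy.comp (measurable_const.prodMk measurable_id))
    _ = 2 * ∫⁻ x in Λ, ∫⁻ y, F x y ∂ν ∂ν := by
        rw [lintegral_add_right _ hFy.lintegral_prod_right', hright, hleft, two_mul]

theorem lintegral_lintegral_mul_mul_indicator_add_lt_top [SFinite ν] {A : α → α → ℝ≥0∞}
    (hA : Measurable fun p : α × α => A p.1 p.2) (hsymm : ∀ x y, A x y = A y x)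
    {g : α → ℝ≥0∞} (hg : Measurable g) {C : ℝ≥0∞} (hC : C ≠ ⊤)
    (hAg : ∀ x, ∫⁻ y, A x y * g y ∂ν ≤ C) {Λ : Set α} (hΛ : MeasurableSet Λ)
    (hgΛ : ∫⁻ x in Λ, g x ∂ν ≠ ⊤) :
    ∫⁻ x, ∫⁻ y, g x * A x y * g y * (Λ.indicator 1 x + Λ.indicator 1 y) ∂ν ∂ν < ⊤ := by
  rw [lintegral_lintegral_mul_indicator_add_of_symm (by fun_prop)
    (fun x y => by rw [hsymm]; ring) hΛ]
  refine mul_lt_top ofNat_lt_top (lt_of_le_of_lt ?_ (mul_lt_top hgΛ.lt_top hC.lt_top))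
  calc ∫⁻ x in Λ, ∫⁻ y, g x * A x y * g y ∂ν ∂ν
      = ∫⁻ x in Λ, g x * ∫⁻ y, A x y * g y ∂ν ∂ν := by
        simp_rw [mul_assoc]
        exact lintegral_congr fun x => lintegral_const_mul _ (by fun_prop)
    _ ≤ ∫⁻ x in Λ, g x * C ∂ν := setLIntegral_mono' hΛ fun x _ => by gcongr; exact hAg x
    _ = (∫⁻ x in Λ, g x ∂ν) * C := lintegral_mul_const' _ _ hC

end Kernel

theorem example_rate_condK1_general {X : Type*} [TopologicalSpace X]
    [LocallyCompactSpace X] [SecondCountableTopology X] [T2Space X]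
    [MeasurableSpace X] [BorelSpace X]
    (ν : Measure X) [ν.Regular] [NullSingletonClass ν]
    (μ : Measure (Config X)) [IsProbabilityMeasure μ]
    (r : X → Config X → ℝ)
    (hrm : Measurable fun p : X × Config X => r p.1 p.2)
    (hMecke : MeckeIdentity ν μ r)
    (a : X → X → ℝ) (hasym : ∀ x y, a x y = a y x)
    (ham : Measurable fun p : X × X => a p.1 p.2)
    (habdd : ∃ M : ℝ, ∀ x y, a x y ≤ M)
    (haint : ⨆ x, ∫⁻ y, ENNReal.ofReal (a x y) ∂ν < ⊤)
    (j : X → ℝ) (hjm : Measurable j)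
    (hrj : ∀ x γ, r x γ ≤ j x)
    (hjint : ∀ Λ : Set X, IsB0 Λ → ∫⁻ x in Λ, ENNReal.ofReal (j x) ∂ν < ⊤)
    (hjbdd : ∃ Λ₀ : Set X, IsB0 Λ₀ ∧ ∃ M : ℝ, ∀ x ∉ Λ₀, j x ≤ M)
    (s : ℝ) (hs : s ∈ Set.Icc (0 : ℝ) 1)
    (c : X → X → Config X → ℝ)
    (hc : ∀ x y γ, c x y γ =
      if 0 < r x γ ∧ 0 < r y γ then a x y * r x γ ^ (s - 1) * r y γ ^ s else 0) :
    CondK1 ν μ c := by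
  obtain rfl : c = papangelouRate a r s := funext fun x => funext fun y => funext (hc x y)
  obtain ⟨M, hM⟩ := habdd
  obtain ⟨Λ₀, hΛ₀, M', hM'⟩ := hjbdd
  set g : X → ℝ≥0∞ := fun x => 1 + ENNReal.ofReal (j x)
  have hgΛ : ∀ Λ, IsB0 Λ → ∫⁻ x in Λ, g x ∂ν ≠ ⊤ := fun Λ hΛ => by
    rw [lintegral_add_left measurable_const, setLIntegral_const, one_mul]
    exact add_ne_top.2 ⟨(hΛ.measure_lt_top ν).ne, (hjint Λ hΛ).ne⟩
  have hAg := lintegral_mul_le_of_le_of_le_off (ν := ν) (g := g) hΛ₀.1 ofReal_ne_top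
    (M' := 1 + ENNReal.ofReal M') (by finiteness) (fun x y => ofReal_le_ofReal (hM x y))
    (fun y hy => add_le_add_right (ofReal_le_ofReal (hM' y hy)) 1)
  refine condK1_of_le hMecke (measurable_papangelouRate ham hrm s) _
    (fun x y γ _ => ofReal_mul_papangelouRate_le hrj hs x y γ) fun Λ hΛ => ?_
  exact lintegral_lintegral_mul_mul_indicator_add_lt_top ham.ennreal_ofReal
    (fun x y => by rw [hasym]) (by fun_prop)
    (add_ne_top.2 ⟨mul_ne_top ofReal_ne_top (hgΛ Λ₀ hΛ₀), mul_ne_top (by finiteness) haint.ne⟩)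
    hAg hΛ.1 (hgΛ Λ hΛ)

/-- Proposition 3.3, integrability: for the rate
`c_s(x,y,γ) = a(x,y)·r(x,γ)^{s−1}·r(y,γ)^{s}·𝟙{r(x,γ)>0 ∧ r(y,γ)>0}`, `s ∈ [0,1]`,
condition (K1) holds. -/
theorem example_rate_condK1 {X : Type*} [TopologicalSpace X]
    [LocallyCompactSpace X] [SecondCountableTopology X] [T2Space X]
    [MeasurableSpace X] [BorelSpace X]
    (ν : Measure X) [ν.Regular] [NullSingletonClass ν]
    (μ : Measure (Config X)) [IsProbabilityMeasure μ]
    (r : X → Config X → ℝ) (hr0 : ∀ x γ, 0 ≤ r x γ)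
    (hrm : Measurable fun p : X × Config X => r p.1 p.2)
    (hMecke : MeckeIdentity ν μ r)
    (a : X → X → ℝ) (ha0 : ∀ x y, 0 ≤ a x y) (hasym : ∀ x y, a x y = a y x)
    (ham : Measurable fun p : X × X => a p.1 p.2)
    (habdd : ∃ M : ℝ, ∀ x y, a x y ≤ M)
    (haint : ⨆ x, ∫⁻ y, ENNReal.ofReal (a x y) ∂ν < ⊤)
    (j : X → ℝ) (hj0 : ∀ x, 0 ≤ j x) (hjm : Measurable j)
    (hrj : ∀ x γ, r x γ ≤ j x)
    (hjint : ∀ Λ : Set X, IsB0 Λ → ∫⁻ x in Λ, ENNReal.ofReal (j x) ∂ν < ⊤)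
    (hjbdd : ∃ Λ₀ : Set X, IsB0 Λ₀ ∧ ∃ M : ℝ, ∀ x ∉ Λ₀, j x ≤ M)
    (s : ℝ) (hs : s ∈ Set.Icc (0 : ℝ) 1)
    (c : X → X → Config X → ℝ)
    (hc : ∀ x y γ, c x y γ =
      if 0 < r x γ ∧ 0 < r y γ then a x y * r x γ ^ (s - 1) * r y γ ^ s else 0) :
    CondK1 ν μ c :=
  example_rate_condK1_general ν μ r hrm hMecke a hasym ham habdd haint j hjm hrj hjint hjbdd s hs c
    hc
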